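/- arXiv:2007.12573 — 4 statements merged into one kernel-verified Lean document; each statement's English description precedes it below -/
import Mathlib

section
/- Eigenvalue Theorem: Let F be a field and f₁,…,f_s ∈ F[x₁,…,x_n] be such that A = F[x₁,…,x_n]/⟨f₁,…,f_s⟩ is finite-dimensional over F, and let F̄ be an algebraic closure of F. For any f ∈ F[x₁,…,x_n], the set of eigenvalues of the F̄-linear multiplication map m_f : Ā → Ā on Ā = A ⊗_F F̄ is exactly the set {f(a) : a ∈ V_{F̄}(f₁,…,f_s)} of values of f at the common zeros of f₁,…,f_s in F̄ⁿ. -/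
open MvPolynomial

/-- Auxiliary: the extended quotient is module-finite over `K`. -/
theorem eigenvalue_theorem_aux_finite {F K : Type*} [Field F] [Field K] [Algebra F K]
    {n : ℕ} (I : Ideal (MvPolynomial (Fin n) F))
    (hA : FiniteDimensional F (MvPolynomial (Fin n) F ⧸ I)) :
    Module.Finite K
      (MvPolynomial (Fin n) K ⧸ I.map (MvPolynomial.map (algebraMap F K))) := by
  set J := I.map (MvPolynomial.map (algebraMap F K)) with hJ
  let φ : MvPolynomial (Fin n) F →ₐ[F] MvPolynomial (Fin n) K :=
    MvPolynomial.mapAlgHom (Algebra.ofId F K)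
  have hφ : (φ : MvPolynomial (Fin n) F →+* MvPolynomial (Fin n) K)
      = MvPolynomial.map (algebraMap F K) := by
    exact MvPolynomial.mapAlgHom_coe_ringHom (Algebra.ofId F K)
  have hle : I ≤ J.comap (φ : MvPolynomial (Fin n) F →+* MvPolynomial (Fin n) K) := by
    rw [hφ]; exact Ideal.le_comap_map
  let ψ : (MvPolynomial (Fin n) F ⧸ I) →ₐ[F]
      (MvPolynomial (Fin n) K ⧸ J) := Ideal.quotientMapₐ J φ hle
  have hint : ∀ i : Fin n, IsIntegral K (Ideal.Quotient.mk J (X i)) := by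
    intro i
    have h1 : IsIntegral F (Ideal.Quotient.mk I (X i)) := IsIntegral.of_finite F _
    have h2 : IsIntegral F (ψ (Ideal.Quotient.mk I (X i))) := h1.map ψ
    have h3 : ψ (Ideal.Quotient.mk I (X i)) = Ideal.Quotient.mk J (X i) := by
      have hXi : φ (X i) = X i := by
        simp [φ]
      exact (Ideal.quotient_map_mkₐ J φ hle).trans (by rw [hXi]; rfl)
    rw [h3] at h2
    exact h2.tower_top (A := K)
  have hadj : Algebra.adjoin K
      (Set.range fun i : Fin n => Ideal.Quotient.mk J (X i)) = ⊤ := by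
    have hr : (Set.range fun i : Fin n => Ideal.Quotient.mk J (X i))
        = (Ideal.Quotient.mkₐ K J) '' (Set.range (X : Fin n → MvPolynomial (Fin n) K)) := by
      rw [← Set.range_comp]; rfl
    rw [hr, ← AlgHom.map_adjoin, MvPolynomial.adjoin_range_X, Algebra.map_top,
      (AlgHom.range_eq_top _).mpr (Ideal.Quotient.mkₐ_surjective K J)]
  have hfg : (⊤ : Submodule K (MvPolynomial (Fin n) K ⧸ J)).FG := by
    rw [← Algebra.top_toSubmodule, ← hadj]
    exact fg_adjoin_of_finite (Set.finite_range _) (by rintro x ⟨i, rfl⟩; exact hint i)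
  exact ⟨hfg⟩

/-- Auxiliary: in a module-finite commutative algebra over a field, `c` is an eigenvalue
of multiplication by `q` iff `q - c` is not a unit. -/
theorem eigenvalue_theorem_aux_spec {K R : Type*} [Field K] [CommRing R] [Algebra K R]
    [Module.Finite K R] (q : R) (c : K) :
    Module.End.HasEigenvalue (LinearMap.mulLeft K q) c ↔
      ¬ IsUnit (q - algebraMap K R c) := by
  constructor
  · intro hc hu
    obtain ⟨v, hv⟩ := hc.exists_hasEigenvector
    have hqv : q * v = c • v := by
      have h := hv.apply_eq_smul
      simpa [LinearMap.mulLeft_apply] using h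
    have hz : (q - algebraMap K R c) * v = 0 := by
      rw [sub_mul, hqv, ← Algebra.smul_def, sub_self]
    exact hv.2 ((IsUnit.mul_right_eq_zero hu).mp hz)
  · intro hu
    have hns : ¬ Function.Surjective (LinearMap.mulLeft K (q - algebraMap K R c)) := by
      intro hsurj
      obtain ⟨v, hv⟩ := hsurj 1
      exact hu (IsUnit.of_mul_eq_one v hv)
    have hni : ¬ Function.Injective (LinearMap.mulLeft K (q - algebraMap K R c)) := fun hinj =>
      hns ((LinearMap.injective_iff_surjective).mp hinj)
    rw [← LinearMap.ker_eq_bot] at hni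
    obtain ⟨u, humem, hu0⟩ := Submodule.exists_mem_ne_zero_of_ne_bot hni
    have hbu : (q - algebraMap K R c) * u = 0 := humem
    have hqu : q * u = c • u := by
      have h := sub_eq_zero.mp (by rwa [sub_mul] at hbu)
      rw [h, ← Algebra.smul_def]
    exact Module.End.hasEigenvalue_of_hasEigenvector
      ⟨Module.End.mem_eigenspace_iff.mpr (by simpa [LinearMap.mulLeft_apply] using hqu), hu0⟩

/-- **Eigenvalue Theorem.** Let `F` be a field with algebraic closure `K`, and let
`f₁, …, f_s ∈ F[x₁,…,x_n]` be such that `A = F[x₁,…,x_n]/⟨f₁,…,f_s⟩` is finite-dimensional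
over `F`.  For `g ∈ F[x₁,…,x_n]`, the eigenvalues of the `K`-linear multiplication map
`m_g` on `Ā = K[x₁,…,x_n]/⟨f₁,…,f_s⟩·K[x₁,…,x_n] ≅ A ⊗_F K` are exactly the values `g(a)`
at the common zeros `a ∈ V_K(f₁,…,f_s)`. -/
theorem eigenvalue_theorem {F K : Type*} [Field F] [Field K] [Algebra F K] [IsAlgClosure F K]
    {n s : ℕ} (f : Fin s → MvPolynomial (Fin n) F)
    (I : Ideal (MvPolynomial (Fin n) F)) (hI : I = Ideal.span (Set.range f))
    (hA : FiniteDimensional F (MvPolynomial (Fin n) F ⧸ I))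
    (J : Ideal (MvPolynomial (Fin n) K))
    (hJ : J = I.map (MvPolynomial.map (algebraMap F K)))
    (g : MvPolynomial (Fin n) F) (c : K) :
    Module.End.HasEigenvalue
      (LinearMap.mulLeft K (Ideal.Quotient.mk J (g.map (algebraMap F K)))) c ↔
    ∃ a : Fin n → K,
      (∀ i, MvPolynomial.eval a ((f i).map (algebraMap F K)) = 0) ∧
      MvPolynomial.eval a (g.map (algebraMap F K)) = c := by
  haveI : IsAlgClosed K := IsAlgClosure.isAlgClosed F
  haveI : Module.Finite K (MvPolynomial (Fin n) K ⧸ I.map (MvPolynomial.map (algebraMap F K))) :=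
    eigenvalue_theorem_aux_finite I hA
  haveI : Module.Finite K (MvPolynomial (Fin n) K ⧸ J) := by rw [hJ]; infer_instance
  have halg : ∀ d : K, algebraMap K (MvPolynomial (Fin n) K ⧸ J) d
      = Ideal.Quotient.mk J (C d) := fun d => rfl
  rw [eigenvalue_theorem_aux_spec]
  constructor
  · intro hu
    obtain ⟨M, hM, hbM⟩ := exists_max_ideal_of_mem_nonunits (mem_nonunits_iff.mpr hu)
    haveI := hM
    haveI hmmax : (M.comap (Ideal.Quotient.mk J)).IsMaximal :=
      Ideal.comap_isMaximal_of_surjective _ Ideal.Quotient.mk_surjective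
    obtain ⟨a, ha⟩ := (MvPolynomial.isMaximal_iff_eq_vanishingIdeal_singleton).mp hmmax
    refine ⟨a, ?_, ?_⟩
    · intro i
      have hfiJ : (f i).map (algebraMap F K) ∈ J := by
        rw [hJ]
        apply Ideal.mem_map_of_mem
        rw [hI]; exact Ideal.subset_span ⟨i, rfl⟩
      have hmem : (f i).map (algebraMap F K) ∈ M.comap (Ideal.Quotient.mk J) := by
        simp only [Ideal.mem_comap]
        rw [Ideal.Quotient.eq_zero_iff_mem.mpr hfiJ]
        exact M.zero_mem
      rw [ha] at hmem
      exact (MvPolynomial.mem_vanishingIdeal_singleton_iff a _).mp hmem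
    · have hmem : g.map (algebraMap F K) - C c ∈ M.comap (Ideal.Quotient.mk J) := by
        rw [Ideal.mem_comap, RingHom.map_sub, ← halg c]
        exact hbM
      rw [ha] at hmem
      have h := (MvPolynomial.mem_vanishingIdeal_singleton_iff a _).mp hmem
      simpa [sub_eq_zero] using h
  · rintro ⟨a, hfa, hga⟩ hu
    have hJker : J ≤ RingHom.ker (MvPolynomial.eval a) := by
      rw [hJ, hI, Ideal.map_span, Ideal.span_le]
      rintro p ⟨p', ⟨i, rfl⟩, rfl⟩
      exact hfa i
    have hεb : Ideal.Quotient.lift J (MvPolynomial.eval a) (fun x hx => RingHom.mem_ker.mp (hJker hx))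
        (Ideal.Quotient.mk J (g.map (algebraMap F K))
          - algebraMap K (MvPolynomial (Fin n) K ⧸ J) c) = 0 := by
      rw [RingHom.map_sub, halg c, Ideal.Quotient.lift_mk, Ideal.Quotient.lift_mk]
      simp [hga]
    have hone : IsUnit ((0 : K)) := by
      rw [← hεb]
      exact hu.map (Ideal.Quotient.lift J (MvPolynomial.eval a) (fun x hx => RingHom.mem_ker.mp (hJker hx)))
    exact not_isUnit_zero hone
end

section
/- Stickelberger Trace Formula (Theorem III of Stickelberger 1897): Let Ω be a number field with ring of integers 𝒪 and let p be a prime with factorization p𝒪 = 𝔭₁^{e₁}⋯𝔭_m^{e_m} into powers of distinct prime ideals 𝔭₁,…,𝔭_m. Then for every α ∈ 𝒪, Tr_p(α) = Σ_{i=1}^m e_i·Tr_{𝔭_i}(α) in 𝔽_p, where for an ideal 𝔞 containing p, Tr_𝔞(α) denotes the trace of the 𝔽_p-linear multiplication-by-α map on 𝒪/𝔞, and Tr_p = Tr_{p𝒪}. -/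
open LinearMap

section ZModHelpers

variable {p : ℕ} [NeZero p]

lemma zmod_smul_eq_nsmul' {M : Type*} [AddCommMonoid M] [Module (ZMod p) M]
    (c : ZMod p) (x : M) : c • x = c.val • x := by
  have h : ((c.val : ℕ) : ZMod p) = c := ZMod.natCast_rightInverse c
  conv_lhs => rw [← h, Nat.cast_smul_eq_nsmul]

/-- Any additive equivalence between `ZMod p`-modules is automatically linear. -/
def addEquivToZModLinear (p : ℕ) [NeZero p] {M N : Type*} [AddCommMonoid M] [AddCommMonoid N]
    [Module (ZMod p) M] [Module (ZMod p) N] (e : M ≃+ N) : M ≃ₗ[ZMod p] N :=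
  e.toLinearEquiv (by
    intro c x
    rw [zmod_smul_eq_nsmul', zmod_smul_eq_nsmul', map_nsmul])

lemma trace_eq_of_addEquiv {M N : Type*} [AddCommGroup M] [AddCommGroup N]
    [Module (ZMod p) M] [Module (ZMod p) N] (e : M ≃+ N)
    (f : M →ₗ[ZMod p] M) (g : N →ₗ[ZMod p] N) (h : ∀ x, e (f x) = g (e x)) :
    trace (ZMod p) M f = trace (ZMod p) N g := by
  have hg : g = (addEquivToZModLinear p e).conj f := by
    ext y
    rw [LinearEquiv.conj_apply]
    simp only [coe_comp, Function.comp_apply, LinearEquiv.coe_coe]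
    rw [show ((addEquivToZModLinear p e).symm y : M) = e.symm y from rfl,
      show ∀ z : M, (addEquivToZModLinear p e) z = e z from fun _ => rfl,
      h (e.symm y), e.apply_symm_apply]
  rw [hg, trace_conj']

end ZModHelpers

section SES

lemma finite_of_submodule_quotient {k M : Type*} [DivisionRing k] [AddCommGroup M]
    [Module k M] (W : Submodule k M) [Finite W] [Finite (M ⧸ W)] : Finite M := by
  obtain ⟨W', hc⟩ := Submodule.exists_isCompl W
  haveI : Finite W' :=
    Finite.of_equiv _ (Submodule.quotientEquivOfIsCompl W W' hc).toEquiv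
  exact Finite.of_equiv _ (Submodule.prodEquivOfIsCompl W W' hc).toEquiv

lemma trace_eq_trace_restrict_add_trace_mapQ {k M : Type*} [Field k] [AddCommGroup M]
    [Module k M] [Module.Finite k M] (W : Submodule k M) (f : M →ₗ[k] M)
    (hf : ∀ x ∈ W, f x ∈ W) :
    trace k M f = trace k W (f.restrict hf)
      + trace k (M ⧸ W) (Submodule.mapQ W W f (fun x hx => hf x hx)) := by
  classical
  obtain ⟨W', hc⟩ := Submodule.exists_isCompl W
  haveI : Module.Finite k W := inferInstance
  haveI : Module.Finite k W' := inferInstance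
  set e := Submodule.prodEquivOfIsCompl W W' hc with he
  have h1 : trace k M f = trace k (W × W') (e.symm.conj f) := (trace_conj' f e.symm).symm
  set f' := e.symm.conj f with hf'
  have hsplit : f' = (inl k W W' ∘ₗ (fst k W W' ∘ₗ f')) + (inr k W W' ∘ₗ (snd k W W' ∘ₗ f')) := by
    ext x <;> simp
  have h2 : trace k (W × W') f' =
      trace k W ((fst k W W' ∘ₗ f') ∘ₗ inl k W W') +
      trace k W' ((snd k W W' ∘ₗ f') ∘ₗ inr k W W') := by
    conv_lhs => rw [hsplit]
    rw [map_add, trace_comp_comm' (inl k W W') (fst k W W' ∘ₗ f'),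
      trace_comp_comm' (inr k W W') (snd k W W' ∘ₗ f')]
  have hW : ∀ m : M, (hm : m ∈ W) → e.symm m = (⟨m, hm⟩, 0) := by
    intro m hm
    apply e.injective
    rw [e.apply_symm_apply]
    simp [he, Submodule.coe_prodEquivOfIsCompl]
  have h3 : (fst k W W' ∘ₗ f') ∘ₗ inl k W W' = f.restrict hf := by
    ext w
    have h4 : e (w, 0) = (w : M) := by simp [he, Submodule.coe_prodEquivOfIsCompl]
    simp only [coe_comp, Function.comp_apply, inl_apply, fst_apply, hf',
      LinearEquiv.conj_apply, LinearEquiv.coe_coe, LinearEquiv.symm_symm]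
    rw [h4, hW (f w) (hf w w.2)]
    simp [LinearMap.restrict_coe_apply]
  set Q := Submodule.quotientEquivOfIsCompl W W' hc with hQ
  have h6 : (snd k W W' ∘ₗ f') ∘ₗ inr k W W'
      = Q.conj (Submodule.mapQ W W f (fun x hx => hf x hx)) := by
    ext w'
    simp only [coe_comp, Function.comp_apply, inr_apply, snd_apply, hf',
      LinearEquiv.conj_apply, LinearEquiv.coe_coe, LinearEquiv.symm_symm]
    have h4 : e (0, w') = (w' : M) := by simp [he, Submodule.coe_prodEquivOfIsCompl]
    rw [h4]
    have hsymm : Q.symm w' = Submodule.Quotient.mk (w' : M) := by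
      apply Q.injective
      rw [Q.apply_symm_apply, hQ, Submodule.quotientEquivOfIsCompl_apply_mk_coe]
    rw [hsymm, Submodule.mapQ_apply]
    have hd : ∀ z : ↥W × ↥W', ((z.1 : M) + (z.2 : M)) = e z := by
      rintro ⟨u, v⟩; simp [he, Submodule.coe_prodEquivOfIsCompl]
    have hd2 : f (w' : M) = ((e.symm (f (w' : M))).1 : M) + ((e.symm (f (w' : M))).2 : M) := by
      rw [hd (e.symm (f (w' : M))), e.apply_symm_apply]
    have hmk : (Submodule.Quotient.mk (f (w' : M)) : M ⧸ W)
        = Submodule.Quotient.mk ((e.symm (f (w' : M))).2 : M) := by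
      conv_lhs => rw [hd2]
      rw [Submodule.Quotient.mk_add,
        (Submodule.Quotient.mk_eq_zero W).mpr (e.symm (f (w' : M))).1.2, zero_add]
    rw [hmk, hQ, Submodule.quotientEquivOfIsCompl_apply_mk_coe]
  rw [h1, h2, h3, h6, trace_conj']

end SES

/-- For an ideal `𝔞` of a commutative ring `R` containing the image of `p : ℕ`, the
quotient `R ⧸ 𝔞` is naturally an algebra over `ZMod p = 𝔽_p`; `idealTrace p 𝔞 h α` is the
trace `Tr_𝔞(α)` of the `ZMod p`-linear multiplication-by-`α` map `x ↦ αx` on `R ⧸ 𝔞`. -/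
noncomputable def idealTrace {R : Type*} [CommRing R] (p : ℕ) (𝔞 : Ideal R)
    (h : (p : R) ∈ 𝔞) (α : R) : ZMod p :=
  letI : Algebra (ZMod p) (R ⧸ 𝔞) :=
    RingHom.toAlgebra <|
      (Ideal.Quotient.lift (Ideal.span {(p : ℤ)})
          ((Ideal.Quotient.mk 𝔞).comp (Int.castRingHom R))
          (by
            have hp0 : Ideal.Quotient.mk 𝔞 (((p : ℤ) : R)) = 0 := by
              rw [Ideal.Quotient.eq_zero_iff_mem]; simpa using h
            intro x hx
            rw [Ideal.mem_span_singleton] at hx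
            obtain ⟨k, rfl⟩ := hx
            simp only [RingHom.comp_apply, Int.coe_castRingHom, Int.cast_mul, map_mul,
              hp0, zero_mul])).comp
        (Int.quotientSpanNatEquivZMod p).symm.toRingHom
  LinearMap.trace (ZMod p) (R ⧸ 𝔞) (LinearMap.mulLeft (ZMod p) (Ideal.Quotient.mk 𝔞 α))

namespace StickelbergerAux

/-- The `ZMod p`-algebra structure on `R ⧸ 𝔞` used in `idealTrace`. -/
noncomputable def qAlg {R : Type*} [CommRing R] (p : ℕ) (𝔞 : Ideal R)
    (h : (p : R) ∈ 𝔞) : Algebra (ZMod p) (R ⧸ 𝔞) :=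
  RingHom.toAlgebra <|
    (Ideal.Quotient.lift (Ideal.span {(p : ℤ)})
        ((Ideal.Quotient.mk 𝔞).comp (Int.castRingHom R))
        (by
          have hp0 : Ideal.Quotient.mk 𝔞 (((p : ℤ) : R)) = 0 := by
            rw [Ideal.Quotient.eq_zero_iff_mem]; simpa using h
          intro x hx
          rw [Ideal.mem_span_singleton] at hx
          obtain ⟨k, rfl⟩ := hx
          simp only [RingHom.comp_apply, Int.coe_castRingHom, Int.cast_mul, map_mul,
            hp0, zero_mul])).comp
      (Int.quotientSpanNatEquivZMod p).symm.toRingHom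

variable {R : Type*} [CommRing R] (p : ℕ)

lemma idealTrace_def (𝔞 : Ideal R) (h : (p : R) ∈ 𝔞) (α : R) :
    idealTrace p 𝔞 h α =
      letI := qAlg p 𝔞 h
      LinearMap.trace (ZMod p) (R ⧸ 𝔞) (LinearMap.mulLeft (ZMod p) (Ideal.Quotient.mk 𝔞 α)) :=
  rfl

lemma idealTrace_congr {𝔞 𝔟 : Ideal R} (hab : 𝔞 = 𝔟) (h : (p : R) ∈ 𝔞) (α : R) :
    idealTrace p 𝔞 h α = idealTrace p 𝔟 (hab ▸ h) α := by
  subst hab; rfl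

lemma idealTrace_top (h : (p : R) ∈ (⊤ : Ideal R)) (α : R) :
    idealTrace p (⊤ : Ideal R) h α = 0 := by
  letI := qAlg p (⊤ : Ideal R) h
  haveI : Subsingleton (R ⧸ (⊤ : Ideal R)) := by
    constructor
    intro a b
    obtain ⟨x, rfl⟩ := Ideal.Quotient.mk_surjective a
    obtain ⟨y, rfl⟩ := Ideal.Quotient.mk_surjective b
    rw [Ideal.Quotient.eq]
    trivial
  rw [idealTrace_def]
  rw [show (LinearMap.mulLeft (ZMod p) (Ideal.Quotient.mk (⊤ : Ideal R) α)) = 0 from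
    Subsingleton.elim _ _]
  exact map_zero _

lemma idealTrace_mul [Fact p.Prime] (I J : Ideal R) (hc : IsCoprime I J)
    (hI : (p : R) ∈ I) (hJ : (p : R) ∈ J) (hIJ : (p : R) ∈ I * J)
    [Finite (R ⧸ I)] [Finite (R ⧸ J)] (α : R) :
    idealTrace p (I * J) hIJ α = idealTrace p I hI α + idealTrace p J hJ α := by
  letI := qAlg p (I * J) hIJ
  letI := qAlg p I hI
  letI := qAlg p J hJ
  rw [idealTrace_def, idealTrace_def, idealTrace_def]
  set e := Ideal.quotientMulEquivQuotientProd I J hc with he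
  have hek : ∀ x : R, e (Ideal.Quotient.mk (I * J) x)
      = (Ideal.Quotient.mk I x, Ideal.Quotient.mk J x) := by
    intro x
    ext
    · rw [Ideal.quotientMulEquivQuotientProd_fst]
      rfl
    · rw [Ideal.quotientMulEquivQuotientProd_snd]
      rfl
  have key := trace_eq_of_addEquiv (e.toAddEquiv)
    (LinearMap.mulLeft (ZMod p) (Ideal.Quotient.mk (I * J) α))
    (LinearMap.prodMap (LinearMap.mulLeft (ZMod p) (Ideal.Quotient.mk I α))
      (LinearMap.mulLeft (ZMod p) (Ideal.Quotient.mk J α)))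
    (by
      intro x
      obtain ⟨y, rfl⟩ := Ideal.Quotient.mk_surjective x
      simp only [mulLeft_apply, RingEquiv.toAddEquiv_eq_coe, RingEquiv.coe_toAddEquiv,
        prodMap_apply]
      rw [hek, map_mul, hek, hek]
      rfl)
  rw [key, trace_prodMap']

set_option maxHeartbeats 1600000 in
lemma idealTrace_pow [IsDedekindDomain R] [Fact p.Prime] (P : Ideal R) [P.IsPrime]
    (hP : P ≠ ⊥) [Finite (R ⧸ P)] (α : R) :
    ∀ n : ℕ, 0 < n → ∀ (hpn : (p : R) ∈ P ^ n) (hp1 : (p : R) ∈ P),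
      Finite (R ⧸ P ^ n) ∧
        idealTrace p (P ^ n) hpn α = (n : ZMod p) * idealTrace p P hp1 α := by
  intro n
  induction n with
  | zero => intro hn; exact absurd hn (lt_irrefl 0)
  | succ n IH =>
    intro _ hpn hp1
    rcases Nat.eq_zero_or_pos n with rfl | hn
    · constructor
      · rw [pow_one]; infer_instance
      · rw [idealTrace_congr p (pow_one P) hpn α]
        simp
    -- now n > 0
    have hpn' : (p : R) ∈ P ^ n := Ideal.pow_le_pow_right n.le_succ hpn
    obtain ⟨IHfin, IHtr⟩ := IH hn hpn' hp1
    haveI : Finite (R ⧸ P ^ n) := IHfin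
    -- choose a ∈ P^n \ P^(n+1)
    have hPtop : P ≠ ⊤ := Ideal.IsPrime.ne_top inferInstance
    have hlt : P ^ (n + 1) < P ^ n :=
      Ideal.pow_right_strictAnti P hP hPtop (Nat.lt_succ_self n)
    obtain ⟨a, haM, haN⟩ := SetLike.exists_of_lt hlt
    -- the key ideal-theoretic fact : P^n ≤ (a) + P^(n+1)
    have key : P ^ n ≤ Ideal.span {a} ⊔ P ^ (n + 1) := by
      classical
      have ha0 : Ideal.span {a} ≠ ⊥ := by
        rw [Ne, Ideal.span_singleton_eq_bot]
        rintro rfl; exact haN (zero_mem _)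
      have hPprime : Prime P := (Ideal.prime_iff_isPrime hP).mpr inferInstance
      have hcount :
          (UniqueFactorizationMonoid.normalizedFactors (Ideal.span {a})).count P = n :=
        Ideal.count_normalizedFactors_eq ((Ideal.span_singleton_le_iff_mem _).mpr haM)
          (by rwa [Ideal.span_singleton_le_iff_mem])
      have hsup := irreducible_pow_sup ha0 hPprime.irreducible (n + 1)
      rw [hcount, min_eq_left n.le_succ] at hsup
      rw [sup_comm]
      exact le_of_eq hsup.symm
    letI := qAlg p (P ^ (n + 1)) hpn
    letI := qAlg p (P ^ n) hpn'
    letI := qAlg p P hp1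
    -- the map θ : R⧸P → R⧸P^(n+1), x ↦ a·x
    have hker : P ≤ ker (a • (P ^ (n + 1)).mkQ) := by
      intro x hx
      rw [LinearMap.mem_ker, LinearMap.smul_apply, Submodule.mkQ_apply,
        ← Submodule.Quotient.mk_smul, Submodule.Quotient.mk_eq_zero, smul_eq_mul]
      exact (pow_succ P n) ▸ Ideal.mul_mem_mul haM hx
    set θ : (R ⧸ P) →ₗ[R] (R ⧸ P ^ (n + 1)) :=
      Submodule.liftQ P (a • (P ^ (n + 1)).mkQ) hker with hθdef
    have hθ : ∀ x : R, θ (Ideal.Quotient.mk P x) = Ideal.Quotient.mk (P ^ (n + 1)) (a * x) := by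
      intro x
      rw [show Ideal.Quotient.mk P x = Submodule.Quotient.mk x from rfl, hθdef,
        Submodule.liftQ_apply, LinearMap.smul_apply, Submodule.mkQ_apply,
        ← Submodule.Quotient.mk_smul, smul_eq_mul]
      rfl
    have hinj : Function.Injective θ := by
      rw [← LinearMap.ker_eq_bot, LinearMap.ker_eq_bot']
      intro z hz
      obtain ⟨x, rfl⟩ := Ideal.Quotient.mk_surjective z
      rw [hθ] at hz
      have hax : a * x ∈ P ^ (n + 1) := by rwa [Ideal.Quotient.eq_zero_iff_mem] at hz
      have hxP := (Ideal.IsPrime.mem_pow_mul P hax).resolve_left haN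
      rwa [Ideal.Quotient.eq_zero_iff_mem]
    set Wi : Ideal (R ⧸ P ^ (n + 1)) := (P ^ n).map (Ideal.Quotient.mk (P ^ (n + 1))) with hWi
    set Wz : Submodule (ZMod p) (R ⧸ P ^ (n + 1)) := Wi.restrictScalars (ZMod p) with hWz
    have hmemW : ∀ x : R ⧸ P, θ x ∈ Wi := by
      intro x
      obtain ⟨y, rfl⟩ := Ideal.Quotient.mk_surjective x
      rw [hθ]
      exact Ideal.mem_map_of_mem _ (Ideal.mul_mem_right y _ haM)
    have hsurjW : ∀ z, z ∈ Wi → ∃ x, θ x = z := by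
      intro z hz
      obtain ⟨w, hw, rfl⟩ :=
        (Ideal.mem_map_iff_of_surjective _ Ideal.Quotient.mk_surjective).mp hz
      obtain ⟨u, hu, v, hv, rfl⟩ := Submodule.mem_sup.mp (key hw)
      obtain ⟨c, rfl⟩ := Ideal.mem_span_singleton'.mp hu
      refine ⟨Ideal.Quotient.mk P c, ?_⟩
      rw [hθ, map_add, Ideal.Quotient.eq_zero_iff_mem.mpr hv, add_zero, mul_comm]
    -- ψ : R⧸P ≃+ Wz
    let θ' : (R ⧸ P) →+ Wz :=
      (θ.toAddMonoidHom).codRestrict Wz (fun x => hmemW x)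
    have hψbij : Function.Bijective θ' := by
      constructor
      · intro x y hxy
        exact hinj (congrArg Subtype.val hxy)
      · rintro ⟨z, hz⟩
        obtain ⟨x, hx⟩ := hsurjW z hz
        exact ⟨x, Subtype.ext hx⟩
    let ψ : (R ⧸ P) ≃+ Wz := AddEquiv.ofBijective θ' hψbij
    haveI : Finite Wz := Finite.of_equiv _ ψ.toEquiv
    -- χ : (R⧸P^(n+1)) ⧸ Wz ≃+ R⧸P^n
    let χ₁ := Submodule.Quotient.restrictScalarsEquiv (ZMod p) Wi
    let χ₂ := DoubleQuot.quotQuotEquivQuotOfLE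
      (Ideal.pow_le_pow_right n.le_succ : P ^ (n + 1) ≤ P ^ n)
    let χ : ((R ⧸ P ^ (n + 1)) ⧸ Wz) ≃+ (R ⧸ P ^ n) :=
      (χ₁.toAddEquiv).trans (χ₂.toAddEquiv)
    have hχ : ∀ z : R, χ (Submodule.Quotient.mk (Ideal.Quotient.mk (P ^ (n + 1)) z))
        = Ideal.Quotient.mk (P ^ n) z := by
      intro z
      show χ₂ (χ₁ (Submodule.Quotient.mk _)) = _
      rw [Submodule.Quotient.restrictScalarsEquiv_mk]
      exact DoubleQuot.quotQuotEquivQuotOfLE_quotQuotMk z _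
    haveI : Finite ((R ⧸ P ^ (n + 1)) ⧸ Wz) := Finite.of_equiv _ χ.symm.toEquiv
    haveI : Finite (R ⧸ P ^ (n + 1)) := finite_of_submodule_quotient Wz
    refine ⟨inferInstance, ?_⟩
    -- the trace computation
    set f : (R ⧸ P ^ (n + 1)) →ₗ[ZMod p] (R ⧸ P ^ (n + 1)) :=
      LinearMap.mulLeft (ZMod p) (Ideal.Quotient.mk (P ^ (n + 1)) α) with hfdef
    have hfW : ∀ x ∈ Wz, f x ∈ Wz := fun x hx => Wi.mul_mem_left _ hx
    have main := trace_eq_trace_restrict_add_trace_mapQ Wz f hfW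
    have hres : trace (ZMod p) Wz (f.restrict hfW)
        = trace (ZMod p) (R ⧸ P) (LinearMap.mulLeft (ZMod p) (Ideal.Quotient.mk P α)) := by
      refine (trace_eq_of_addEquiv ψ
        (LinearMap.mulLeft (ZMod p) (Ideal.Quotient.mk P α)) (f.restrict hfW) ?_).symm
      intro x
      obtain ⟨y, rfl⟩ := Ideal.Quotient.mk_surjective x
      apply Subtype.ext
      show (θ (LinearMap.mulLeft (ZMod p) (Ideal.Quotient.mk P α) (Ideal.Quotient.mk P y)))
        = ((f.restrict hfW) (ψ (Ideal.Quotient.mk P y)) : R ⧸ P ^ (n + 1))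
      rw [LinearMap.restrict_coe_apply]
      show θ (Ideal.Quotient.mk P α * Ideal.Quotient.mk P y)
        = f (θ (Ideal.Quotient.mk P y))
      rw [← map_mul, hθ, hθ, hfdef]
      show Ideal.Quotient.mk _ (a * (α * y))
        = Ideal.Quotient.mk _ α * Ideal.Quotient.mk _ (a * y)
      rw [← map_mul]
      ring_nf
    have hquo : trace (ZMod p) ((R ⧸ P ^ (n + 1)) ⧸ Wz)
          (Submodule.mapQ Wz Wz f (fun x hx => hfW x hx))
        = trace (ZMod p) (R ⧸ P ^ n)
          (LinearMap.mulLeft (ZMod p) (Ideal.Quotient.mk (P ^ n) α)) := by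
      apply trace_eq_of_addEquiv χ
      intro x
      obtain ⟨x, rfl⟩ := Submodule.Quotient.mk_surjective _ x
      obtain ⟨y, rfl⟩ := Ideal.Quotient.mk_surjective x
      rw [Submodule.mapQ_apply]
      rw [show f (Ideal.Quotient.mk (P ^ (n + 1)) y)
        = Ideal.Quotient.mk (P ^ (n + 1)) (α * y) from by rw [hfdef]; exact (map_mul _ _ _).symm]
      rw [hχ, hχ]
      show Ideal.Quotient.mk (P ^ n) (α * y)
        = Ideal.Quotient.mk (P ^ n) α * Ideal.Quotient.mk (P ^ n) y
      exact map_mul _ _ _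
    have e1 : idealTrace p (P ^ (n + 1)) hpn α = trace (ZMod p) (R ⧸ P ^ (n + 1)) f := rfl
    have e2 : idealTrace p (P ^ n) hpn' α = trace (ZMod p) (R ⧸ P ^ n)
        (LinearMap.mulLeft (ZMod p) (Ideal.Quotient.mk (P ^ n) α)) := rfl
    have e3 : idealTrace p P hp1 α = trace (ZMod p) (R ⧸ P)
        (LinearMap.mulLeft (ZMod p) (Ideal.Quotient.mk P α)) := rfl
    rw [e1, main, hres, hquo, ← e2, ← e3, IHtr]
    push_cast
    ring

end StickelbergerAux

set_option maxHeartbeats 1600000 in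
/-- **Stickelberger Trace Formula** (Theorem III of Stickelberger 1897).  Let `Ω` be a
number field with ring of integers `𝒪` and let `p` be a prime with factorization
`p𝒪 = 𝔭₁^{e₁} ⋯ 𝔭_m^{e_m}` into powers of distinct prime ideals.  Then for every
`α ∈ 𝒪` one has `Tr_p(α) = Σ_{i=1}^m e_i · Tr_{𝔭_i}(α)` in `𝔽_p`, where `Tr_𝔞` denotes
the trace of the `𝔽_p`-linear multiplication-by-`α` map on `𝒪 ⧸ 𝔞` and `Tr_p = Tr_{𝔭}`. -/
theorem stickelberger_trace_formula {Ω : Type*} [Field Ω] [NumberField Ω]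
    (p : ℕ) (hp : p.Prime)
    (m : ℕ) (𝔭 : Fin m → Ideal (NumberField.RingOfIntegers Ω)) (e : Fin m → ℕ)
    (hprime : ∀ i, (𝔭 i).IsPrime) (hbot : ∀ i, 𝔭 i ≠ ⊥)
    (hdist : Function.Injective 𝔭) (hpos : ∀ i, 0 < e i)
    (hfact : Ideal.span {(p : NumberField.RingOfIntegers Ω)} = ∏ i, 𝔭 i ^ e i)
    (hmem : ∀ i, (p : NumberField.RingOfIntegers Ω) ∈ 𝔭 i)
    (α : NumberField.RingOfIntegers Ω) :
    idealTrace p (Ideal.span {(p : NumberField.RingOfIntegers Ω)})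
        (Ideal.mem_span_singleton_self _) α =
      ∑ i, (e i : ZMod p) * idealTrace p (𝔭 i) (hmem i) α := by
  classical
  haveI : Fact p.Prime := ⟨hp⟩
  have hp0 : (p : (NumberField.RingOfIntegers Ω)) ≠ 0 := Nat.cast_ne_zero.mpr hp.ne_zero
  have hfin : ∀ I : Ideal (NumberField.RingOfIntegers Ω), I ≠ ⊥ → Finite ((NumberField.RingOfIntegers Ω) ⧸ I) := by
    intro I hI
    exact Ideal.finiteQuotientOfFreeOfNeBot I hI
  have hppow : ∀ i, (p : (NumberField.RingOfIntegers Ω)) ∈ 𝔭 i ^ e i := by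
    intro i
    have hle : (∏ j, 𝔭 j ^ e j) ≤ 𝔭 i ^ e i := by
      rw [← Finset.mul_prod_erase _ _ (Finset.mem_univ i)]
      exact Ideal.mul_le_left
    exact hle (hfact ▸ Ideal.mem_span_singleton_self _)
  haveI : ∀ i, (𝔭 i).IsPrime := hprime
  have claim : ∀ s : Finset (Fin m), ∀ hs : (p : (NumberField.RingOfIntegers Ω)) ∈ ∏ i ∈ s, 𝔭 i ^ e i,
      idealTrace p (∏ i ∈ s, 𝔭 i ^ e i) hs α
        = ∑ i ∈ s, (e i : ZMod p) * idealTrace p (𝔭 i) (hmem i) α := by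
    intro s
    induction s using Finset.induction_on with
    | empty =>
      intro hs
      have h1 : (∏ i ∈ (∅ : Finset (Fin m)), 𝔭 i ^ e i) = ⊤ := by
        rw [Finset.prod_empty, Ideal.one_eq_top]
      rw [StickelbergerAux.idealTrace_congr p h1 hs α, StickelbergerAux.idealTrace_top,
        Finset.sum_empty]
    | @insert i s his IH =>
      intro hs
      have hprod : (∏ j ∈ insert i s, 𝔭 j ^ e j) = (𝔭 i ^ e i) * ∏ j ∈ s, 𝔭 j ^ e j :=
        Finset.prod_insert his
      rw [StickelbergerAux.idealTrace_congr p hprod hs α]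
      have hs' : (p : (NumberField.RingOfIntegers Ω)) ∈ (𝔭 i ^ e i) * ∏ j ∈ s, 𝔭 j ^ e j := hprod ▸ hs
      have hmem1 : (p : (NumberField.RingOfIntegers Ω)) ∈ 𝔭 i ^ e i := hppow i
      have hmem2 : (p : (NumberField.RingOfIntegers Ω)) ∈ ∏ j ∈ s, 𝔭 j ^ e j := Ideal.mul_le_right hs'
      have hcop : IsCoprime (𝔭 i ^ e i) (∏ j ∈ s, 𝔭 j ^ e j) := by
        refine IsCoprime.prod_right fun j hj => ?_
        have hij : 𝔭 i ≠ 𝔭 j := fun hh => his (by rw [hdist hh]; exact hj)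
        have hmax_i : (𝔭 i).IsMaximal := Ideal.IsPrime.isMaximal (hprime i) (hbot i)
        have hmax_j : (𝔭 j).IsMaximal := Ideal.IsPrime.isMaximal (hprime j) (hbot j)
        exact (Ideal.isCoprime_iff_sup_eq.mpr (Ideal.IsMaximal.coprime_of_ne hmax_i hmax_j hij)).pow
      have hne1 : 𝔭 i ^ e i ≠ ⊥ := by
        simpa [Ideal.zero_eq_bot] using pow_ne_zero (e i) (hbot i)
      have hne2 : (∏ j ∈ s, 𝔭 j ^ e j) ≠ ⊥ := by
        intro hb
        rw [hb] at hmem2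
        exact hp0 ((Submodule.mem_bot _).mp hmem2)
      haveI := hfin _ hne1
      haveI := hfin _ hne2
      rw [StickelbergerAux.idealTrace_mul p _ _ hcop hmem1 hmem2 hs' α,
        Finset.sum_insert his, IH hmem2]
      congr 1
      haveI := hfin _ (hbot i)
      exact (StickelbergerAux.idealTrace_pow p (𝔭 i) (hbot i) α (e i) (hpos i)
        hmem1 (hmem i)).2
  have hmem0 : (p : (NumberField.RingOfIntegers Ω)) ∈ ∏ i, 𝔭 i ^ e i := hfact ▸ Ideal.mem_span_singleton_self _
  rw [StickelbergerAux.idealTrace_congr p hfact (Ideal.mem_span_singleton_self _) α]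
  exact claim Finset.univ hmem0
end

section
/- Stickelberger's discriminant relation: The discriminant D of a number field Ω satisfies D ≡ 0 or 1 (mod 4). -/
open Finset Equiv Polynomial

section aux
variable {ι K : Type*} [Fintype ι] [DecidableEq ι] [CommRing K]

noncomputable def Sterm (M : Matrix ι ι K) (π : Perm ι) : K := ∏ i, M (π i) i

noncomputable def Qsum (M : Matrix ι ι K) (u : ℤˣ) : K :=
  ∑ π ∈ Finset.univ.filter (fun π : Perm ι => Perm.sign π = u), Sterm M π

lemma zu_inv (u : ℤˣ) : u⁻¹ = u := by
  rcases Int.units_eq_one_or u with h | h <;> simp [h]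

lemma det_eq_Qsum (M : Matrix ι ι K) : M.det = Qsum M 1 - Qsum M (-1) := by
  rw [Matrix.det_apply]
  rw [← Finset.sum_filter_add_sum_filter_not Finset.univ
      (fun π : Perm ι => Perm.sign π = 1)]
  have h2 : Finset.univ.filter (fun π : Perm ι => ¬ Perm.sign π = 1)
      = Finset.univ.filter (fun π : Perm ι => Perm.sign π = -1) := by
    apply Finset.filter_congr
    intro π _
    rcases Int.units_eq_one_or (Perm.sign π) with h | h <;> simp [h]
  rw [h2]
  rw [Qsum, Qsum, sub_eq_add_neg, ← Finset.sum_neg_distrib]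
  congr 1
  · apply Finset.sum_congr rfl
    intro π hπ
    simp only [Finset.mem_filter] at hπ
    rw [hπ.2, Sterm]; simp
  · apply Finset.sum_congr rfl
    intro π hπ
    simp only [Finset.mem_filter] at hπ
    rw [hπ.2, Sterm]; simp

end aux

section aux2
variable {ι Ω K : Type*} [Fintype ι] [DecidableEq ι] [Field Ω] [Field K]
  [Algebra ℚ Ω] [Algebra ℚ K]

lemma map_Sterm (M : Matrix ι ι K) (σ : K ≃ₐ[ℚ] K) (g : Perm ι)
    (hg : ∀ i j, σ (M i j) = M i (g j)) (π : Perm ι) :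
    σ (Sterm M π) = Sterm M (π * g⁻¹) := by
  rw [Sterm, map_prod]
  simp only [hg]
  have := Equiv.prod_comp g (fun j => M (π (g⁻¹ j)) j)
  simp only [Perm.inv_def, Equiv.symm_apply_apply] at this
  rw [this, Sterm]
  rfl

lemma map_Qsum (M : Matrix ι ι K) (σ : K ≃ₐ[ℚ] K) (g : Perm ι)
    (hg : ∀ i j, σ (M i j) = M i (g j)) (u : ℤˣ) :
    σ (Qsum M u) = Qsum M (u * Perm.sign g) := by
  rw [Qsum, map_sum]
  simp only [map_Sterm M σ g hg]
  rw [Qsum]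
  apply Finset.sum_bij' (fun π _ => π * g⁻¹) (fun ρ _ => ρ * g)
  · intro π hπ
    simp only [Finset.mem_filter, Finset.mem_univ, true_and] at hπ ⊢
    rw [map_mul, map_inv, hπ, zu_inv]
  · intro ρ hρ
    simp only [Finset.mem_filter, Finset.mem_univ, true_and] at hρ ⊢
    rw [map_mul, hρ, mul_assoc]
    rcases Int.units_eq_one_or (Perm.sign g) with h | h <;> simp [h]
  · intro π _; group
  · intro ρ _; group
  · intro π _; rfl

end aux2

lemma fixed_mem_range {x : AlgebraicClosure ℚ}
    (h : ∀ σ : AlgebraicClosure ℚ ≃ₐ[ℚ] AlgebraicClosure ℚ, σ x = x) :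
    ∃ s : ℚ, algebraMap ℚ (AlgebraicClosure ℚ) s = x := by
  classical
  have hx : IsIntegral ℚ x :=
    haveI : Algebra.IsAlgebraic ℚ (AlgebraicClosure ℚ) := AlgebraicClosure.isAlgebraic ℚ; (Algebra.IsAlgebraic.isAlgebraic x).isIntegral
  set q := (minpoly ℚ x).map (algebraMap ℚ (AlgebraicClosure ℚ)) with hq
  have hroots : ∀ y ∈ q.roots, y = x := by
    intro y hy
    have hy' : IsConjRoot ℚ x y := by
      rw [isConjRoot_iff_aeval_eq_zero hx]
      have := (Polynomial.mem_roots_map (minpoly.ne_zero hx)).mp hy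
      rwa [Polynomial.aeval_def]
    haveI : Normal ℚ (AlgebraicClosure ℚ) :=
      haveI : Algebra.IsAlgebraic ℚ (AlgebraicClosure ℚ) := AlgebraicClosure.isAlgebraic ℚ; haveI : IsAlgClosure ℚ (AlgebraicClosure ℚ) := ⟨inferInstance, inferInstance⟩
      IsAlgClosure.normal ℚ _
    obtain ⟨σ, hσ⟩ := hy'.exists_algEquiv
    calc y = σ.symm (σ y) := by simp
    _ = σ.symm x := by rw [hσ]
    _ = x := h σ.symm
  have hsep : q.Separable := ((minpoly.irreducible hx).separable).map
  have hnodup : q.roots.Nodup := Polynomial.nodup_roots hsep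
  have hsplit : Polynomial.Splits q :=
    IsAlgClosed.splits _
  have hcard : q.roots.card = (minpoly ℚ x).natDegree :=
    by rw [← hsplit.natDegree_eq_card_roots, hq, Polynomial.natDegree_map]
  have hle : q.roots.card ≤ 1 := by
    rw [← Multiset.toFinset_card_of_nodup hnodup]
    have hsub : q.roots.toFinset ⊆ {x} := by
      intro y hy
      simp only [Finset.mem_singleton]
      exact hroots y (Multiset.mem_toFinset.mp hy)
    calc q.roots.toFinset.card ≤ ({x} : Finset _).card := Finset.card_le_card hsub
    _ = 1 := Finset.card_singleton x
  have hdeg : (minpoly ℚ x).natDegree = 1 :=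
    le_antisymm (hcard ▸ hle) (minpoly.natDegree_pos hx)
  obtain ⟨s, hs⟩ := minpoly.mem_range_of_degree_eq_one ℚ x
    ((Polynomial.degree_eq_iff_natDegree_eq (minpoly.ne_zero hx)).mpr hdeg)
  exact ⟨s, hs⟩

/-- **Stickelberger's discriminant relation.** The discriminant `D` of a number field `Ω`
satisfies `D ≡ 0` or `1 (mod 4)`. -/
theorem stickelberger_discr_relation (Ω : Type*) [Field Ω] [NumberField Ω] :
    NumberField.discr Ω % 4 = 0 ∨ NumberField.discr Ω % 4 = 1 := by
  classical
  set K := AlgebraicClosure ℚ with hK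
  set ι := Module.Free.ChooseBasisIndex ℤ (NumberField.RingOfIntegers Ω) with hι
  have hcard : Fintype.card ι = Fintype.card (Ω →ₐ[ℚ] K) := by
    rw [AlgHom.card, ← NumberField.RingOfIntegers.rank Ω,
      Module.finrank_eq_card_chooseBasisIndex]
  let e : ι ≃ (Ω →ₐ[ℚ] K) := Fintype.equivOfCardEq hcard
  let b : ι → Ω := NumberField.integralBasis Ω
  let M : Matrix ι ι K := Algebra.embeddingsMatrixReindex ℚ K b e
  have hM : ∀ i j, M i j = e j (b i) := fun i j => rfl
  -- entries are integral over ℤ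
  have hMint : ∀ i j, IsIntegral ℤ (M i j) := by
    intro i j
    rw [hM]
    have hb : IsIntegral ℤ (b i) := by
      rw [show b i = _ from NumberField.integralBasis_apply Ω i]
      exact NumberField.RingOfIntegers.isIntegral_coe _
    exact hb.map ((e j).toRingHom.toIntAlgHom)
  have hQint : ∀ u : ℤˣ, IsIntegral ℤ (Qsum M u) := by
    intro u
    apply IsIntegral.sum
    intro π _
    apply IsIntegral.prod
    intro i _
    exact hMint _ _
  -- Galois action
  have hg : ∀ σ : K ≃ₐ[ℚ] K, ∃ g : Equiv.Perm ι, ∀ i j, σ (M i j) = M i (g j) := by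
    intro σ
    refine ⟨(e.trans (AlgEquiv.arrowCongr (AlgEquiv.refl (A₁ := Ω)) σ)).trans e.symm, ?_⟩
    intro i j
    rw [hM, hM]
    simp [AlgEquiv.arrowCongr]
  have hfixA : ∀ σ : K ≃ₐ[ℚ] K, σ (Qsum M 1 + Qsum M (-1)) = Qsum M 1 + Qsum M (-1) := by
    intro σ
    obtain ⟨g, hgM⟩ := hg σ
    rw [map_add, map_Qsum M σ g hgM, map_Qsum M σ g hgM]
    rcases Int.units_eq_one_or (Equiv.Perm.sign g) with h | h <;> rw [h]
    · norm_num
    · rw [show ((1:ℤˣ) * -1) = -1 by decide, show ((-1:ℤˣ) * -1) = 1 by decide, add_comm]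
  have hfixB : ∀ σ : K ≃ₐ[ℚ] K, σ (Qsum M 1 * Qsum M (-1)) = Qsum M 1 * Qsum M (-1) := by
    intro σ
    obtain ⟨g, hgM⟩ := hg σ
    rw [map_mul, map_Qsum M σ g hgM, map_Qsum M σ g hgM]
    rcases Int.units_eq_one_or (Equiv.Perm.sign g) with h | h <;> rw [h]
    · norm_num
    · rw [show ((1:ℤˣ) * -1) = -1 by decide, show ((-1:ℤˣ) * -1) = 1 by decide, mul_comm]
  obtain ⟨s, hs⟩ := fixed_mem_range hfixA
  obtain ⟨t, ht⟩ := fixed_mem_range hfixB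
  -- s and t are integers
  have hsint : IsIntegral ℤ s := by
    rw [← isIntegral_algebraMap_iff (algebraMap ℚ K).injective, hs]
    exact (hQint 1).add (hQint (-1))
  have htint : IsIntegral ℤ t := by
    rw [← isIntegral_algebraMap_iff (algebraMap ℚ K).injective, ht]
    exact (hQint 1).mul (hQint (-1))
  obtain ⟨A, hA⟩ := IsIntegrallyClosed.isIntegral_iff.mp hsint
  obtain ⟨B, hB⟩ := IsIntegrallyClosed.isIntegral_iff.mp htint
  -- discriminant identity
  have hdiscr : algebraMap ℚ K ((NumberField.discr Ω : ℚ)) = M.det ^ 2 := by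
    rw [NumberField.coe_discr]
    exact Algebra.discr_eq_det_embeddingsMatrixReindex_pow_two ℚ K b e
  have hdet : M.det = Qsum M 1 - Qsum M (-1) := det_eq_Qsum M
  have key : algebraMap ℚ K ((NumberField.discr Ω : ℚ)) = algebraMap ℚ K (s ^ 2 - 4 * t) := by
    rw [hdiscr, hdet, map_sub, map_pow, map_mul, hs, ht, map_ofNat]
    ring
  have keyQ : (NumberField.discr Ω : ℚ) = s ^ 2 - 4 * t :=
    (algebraMap ℚ K).injective key
  rw [← hA, ← hB] at keyQ
  simp only [algebraMap_int_eq, eq_intCast] at keyQ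
  have keyZ : NumberField.discr Ω = A ^ 2 - 4 * B := by exact_mod_cast keyQ
  rcases Int.even_or_odd A with ⟨k, hk⟩ | ⟨k, hk⟩
  · left
    have : NumberField.discr Ω = 4 * (k * k) - 4 * B := by rw [keyZ, hk]; ring
    omega
  · right
    have : NumberField.discr Ω = 4 * (k * k + k - B) + 1 := by rw [keyZ, hk]; ring
    omega
end

section
/- Local case of the Scheja–Storch trace formula: Let A be a finite-dimensional commutative local algebra over a field F with maximal ideal 𝔪 and residue field L = A/𝔪, and suppose L is a separable extension of F. Define λ by dim_F A = λ·[L : F]. Then for every α ∈ A, Tr_A(m_α) = λ·Tr_L(m_{ᾱ}), where m_α : A → A is multiplication by α, ᾱ is the image of α in L, m_{ᾱ} : L → L is multiplication by ᾱ, and traces are taken over F. -/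
open LinearMap

-- trace on a product
lemma trace_prod_decomp {F M N : Type*} [Field F] [AddCommGroup M] [AddCommGroup N]
    [Module F M] [Module F N] [FiniteDimensional F M] [FiniteDimensional F N]
    (g : (M × N) →ₗ[F] (M × N)) :
    trace F (M × N) g =
      trace F M (fst F M N ∘ₗ g ∘ₗ inl F M N) + trace F N (snd F M N ∘ₗ g ∘ₗ inr F M N) := by
  have hid : (inl F M N ∘ₗ fst F M N) + (inr F M N ∘ₗ snd F M N) = LinearMap.id := by
    ext x <;> simp
  calc trace F (M × N) g = trace F (M × N) (g ∘ₗ ((inl F M N ∘ₗ fst F M N) + (inr F M N ∘ₗ snd F M N))) := by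
        rw [hid, comp_id]
    _ = trace F (M × N) (g ∘ₗ (inl F M N ∘ₗ fst F M N)) + trace F (M × N) (g ∘ₗ (inr F M N ∘ₗ snd F M N)) := by
        rw [comp_add, map_add]
    _ = _ := by
        rw [← comp_assoc, trace_comp_comm' (g ∘ₗ inl F M N) (fst F M N),
          ← comp_assoc, trace_comp_comm' (g ∘ₗ inr F M N) (snd F M N), comp_assoc, comp_assoc]

lemma trace_restrict_add_trace_mapQ {F V : Type*} [Field F] [AddCommGroup V] [Module F V]
    [FiniteDimensional F V] (W : Submodule F V) (f : V →ₗ[F] V) (h : W ≤ W.comap f) :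
    trace F V f =
      trace F W (f.restrict fun x hx => h hx) + trace F (V ⧸ W) (Submodule.mapQ W W f h) := by
  obtain ⟨W', hc⟩ := Submodule.exists_isCompl W
  set e : (W × W') ≃ₗ[F] V := Submodule.prodEquivOfIsCompl W W' hc with he
  have h1 : trace F V f = trace F (W × W') (e.symm.conj f) := (trace_conj' f e.symm).symm
  rw [h1, trace_prod_decomp]
  congr 1
  · congr 1
    ext w
    have hfw : f w ∈ W := h w.2
    have hsymm : e.symm (f w) = (⟨f w, hfw⟩, 0) := by
      rw [LinearEquiv.symm_apply_eq]
      simp [he, Submodule.coe_prodEquivOfIsCompl]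
    simp [LinearEquiv.conj_apply, he, Submodule.coe_prodEquivOfIsCompl, hsymm, f.restrict_apply]
    exact hfw
  · -- quotient part
    set q : (V ⧸ W) ≃ₗ[F] W' := Submodule.quotientEquivOfIsCompl W W' hc with hq
    rw [← trace_conj' (Submodule.mapQ W W f h) q]
    congr 1
    ext w'
    have key : ∀ x : V, q (Submodule.Quotient.mk x) = (e.symm x).2 := by
      intro x
      have hx : ((e.symm x).1 : V) + ((e.symm x).2 : V) = x := by
        conv_rhs => rw [← e.apply_symm_apply x]
        rfl
      have hx2 : x - ((e.symm x).2 : V) = ((e.symm x).1 : V) := by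
        nth_rewrite 1 [← hx]
        exact add_sub_cancel_right _ _
      have : (Submodule.Quotient.mk x : V ⧸ W) = Submodule.Quotient.mk ((e.symm x).2 : V) := by
        rw [Submodule.Quotient.eq, hx2]
        exact (e.symm x).1.2
      rw [this, ← Submodule.quotientEquivOfIsCompl_symm_apply W W' hc, hq]
      exact q.apply_symm_apply _
    have hq_symm : q.symm w' = Submodule.Quotient.mk (w' : V) :=
      Submodule.quotientEquivOfIsCompl_symm_apply W W' hc w'
    simp only [LinearEquiv.conj_apply, coe_comp, Function.comp_apply, LinearEquiv.coe_coe,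
      hq_symm]
    rw [Submodule.mapQ_apply, key]
    simp [he, Submodule.coe_prodEquivOfIsCompl]

lemma trace_lsmul_restrictScalars (F L V : Type*) [Field F] [Field L] [Algebra F L]
    [AddCommGroup V] [Module F V] [Module L V] [IsScalarTower F L V]
    [FiniteDimensional F L] [FiniteDimensional L V] (a : L) :
    trace F V ((LinearMap.lsmul L V a).restrictScalars F) =
      Module.finrank L V • trace F L (LinearMap.mulLeft F a) := by
  classical
  let b := Module.finBasis F L
  let c := Module.finBasis L V
  rw [trace_eq_matrix_trace F (b.smulTower c), trace_eq_matrix_trace F b]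
  rw [Matrix.trace, Matrix.trace]
  rw [← Finset.univ_product_univ, Finset.sum_product]
  have entry : ∀ (i : Fin (Module.finrank F L)) (s : Fin (Module.finrank L V)),
      (toMatrix (b.smulTower c) (b.smulTower c) ((LinearMap.lsmul L V a).restrictScalars F))
        (i, s) (i, s) = (toMatrix b b (LinearMap.mulLeft F a)) i i := by
    intro i s
    rw [toMatrix_apply, toMatrix_apply]
    have : ((LinearMap.lsmul L V a).restrictScalars F) ((b.smulTower c) (i, s)) =
        (a * b i) • c s := by
      simp [Module.Basis.smulTower_apply, smul_smul, mul_comm]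
    rw [this, Module.Basis.smulTower_repr_mk]
    simp [mulLeft_apply]
  calc ∑ i, ∑ s, (toMatrix (b.smulTower c) (b.smulTower c)
        ((LinearMap.lsmul L V a).restrictScalars F)) (i, s) (i, s)
      = ∑ i : Fin (Module.finrank F L), ∑ _s : Fin (Module.finrank L V),
          (toMatrix b b (LinearMap.mulLeft F a)) i i := by
        exact Finset.sum_congr rfl fun i _ => Finset.sum_congr rfl fun s _ => entry i s
    _ = Module.finrank L V • ∑ i, (toMatrix b b (LinearMap.mulLeft F a)) i i := by
        rw [Finset.smul_sum]
        exact Finset.sum_congr rfl fun i _ => by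
          rw [Finset.sum_const, Finset.card_univ, Fintype.card_fin]
    _ = _ := rfl

section step
variable {F A : Type*} [Field F] [CommRing A] [Algebra F A] [FiniteDimensional F A]
  [IsLocalRing A]

example (α : A) (k : ℕ) : True := trivial

-- step lemma
set_option maxHeartbeats 1000000 in
lemma step_lemma (α : A) (k : ℕ)
    (IH : ∃ m : ℕ,
      Module.finrank F (A ⧸ (IsLocalRing.maximalIdeal A ^ k : Ideal A)) =
        m * Module.finrank F (A ⧸ IsLocalRing.maximalIdeal A) ∧
      trace F (A ⧸ (IsLocalRing.maximalIdeal A ^ k : Ideal A))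
          (mulLeft F (Ideal.Quotient.mk _ α)) =
        m • trace F (A ⧸ IsLocalRing.maximalIdeal A)
          (mulLeft F (Ideal.Quotient.mk _ α))) :
    ∃ m : ℕ,
      Module.finrank F (A ⧸ (IsLocalRing.maximalIdeal A ^ (k+1) : Ideal A)) =
        m * Module.finrank F (A ⧸ IsLocalRing.maximalIdeal A) ∧
      trace F (A ⧸ (IsLocalRing.maximalIdeal A ^ (k+1) : Ideal A))
          (mulLeft F (Ideal.Quotient.mk _ α)) =
        m • trace F (A ⧸ IsLocalRing.maximalIdeal A)
          (mulLeft F (Ideal.Quotient.mk _ α)) := by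
  obtain ⟨m, hm1, hm2⟩ := IH
  set 𝔪 := IsLocalRing.maximalIdeal A with h𝔪
  set p : Ideal A := 𝔪 ^ (k+1) with hp
  haveI : FiniteDimensional F (A ⧸ p) :=
    Module.Finite.of_surjective (Ideal.Quotient.mkₐ F p).toLinearMap
      Ideal.Quotient.mk_surjective
  haveI : FiniteDimensional F (A ⧸ (𝔪 ^ k : Ideal A)) :=
    Module.Finite.of_surjective (Ideal.Quotient.mkₐ F _).toLinearMap
      Ideal.Quotient.mk_surjective
  haveI : FiniteDimensional F (A ⧸ 𝔪) :=
    Module.Finite.of_surjective (Ideal.Quotient.mkₐ F _).toLinearMap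
      Ideal.Quotient.mk_surjective
  set I : Ideal (A ⧸ p) := (𝔪 ^ k).map (Ideal.Quotient.mk p) with hI
  set W : Submodule F (A ⧸ p) := Submodule.restrictScalars F I with hW
  set β : A ⧸ p := Ideal.Quotient.mk p α with hβ
  have hWf : W ≤ W.comap (mulLeft F β) := by
    intro x hx
    simp only [hW, Submodule.restrictScalars_mem, Submodule.mem_comap, mulLeft_apply] at *
    exact I.mul_mem_left β hx
  have hWf' : ∀ x ∈ W, mulLeft F β x ∈ W := fun x hx => hWf hx
  haveI : (𝔪).IsMaximal := IsLocalRing.maximalIdeal.isMaximal A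
  letI : Field (A ⧸ 𝔪) := Ideal.Quotient.field 𝔪
  have main := trace_restrict_add_trace_mapQ W (mulLeft F β) hWf
  -- quotient part
  have hle : p ≤ 𝔪 ^ k := Ideal.pow_le_pow_right (Nat.le_succ k)
  let e₁ : ((A ⧸ p) ⧸ W) ≃ₗ[F] ((A ⧸ p) ⧸ I) :=
    Submodule.Quotient.restrictScalarsEquiv F I
  let e₂ : ((A ⧸ p) ⧸ I) ≃ₐ[F] (A ⧸ (𝔪 ^ k : Ideal A)) :=
    AlgEquiv.ofRingEquiv (f := DoubleQuot.quotQuotEquivQuotOfLE hle) (fun x => by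
      have h1 : (algebraMap F ((A ⧸ p) ⧸ I) x) =
          DoubleQuot.quotQuotMk p (𝔪 ^ k) (algebraMap F A x) := rfl
      rw [h1, DoubleQuot.quotQuotEquivQuotOfLE_quotQuotMk]
      rfl)
  let E : ((A ⧸ p) ⧸ W) ≃ₗ[F] (A ⧸ (𝔪 ^ k : Ideal A)) := e₁.trans e₂.toLinearEquiv
  have hconj : E.conj (Submodule.mapQ W W (mulLeft F β) hWf) =
      mulLeft F (Ideal.Quotient.mk (𝔪 ^ k) α) := by
    apply LinearMap.ext; intro x
    obtain ⟨a, rfl⟩ := Ideal.Quotient.mk_surjective (I := (𝔪 ^ k : Ideal A)) x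
    have hs1 : E.symm (Ideal.Quotient.mk (𝔪 ^ k) a) =
        Submodule.Quotient.mk (Ideal.Quotient.mk p a) := by
      show e₁.symm (e₂.toLinearEquiv.symm (Ideal.Quotient.mk (𝔪 ^ k) a)) =
          Submodule.Quotient.mk (Ideal.Quotient.mk p a)
      have h2 : e₂.toLinearEquiv.symm (Ideal.Quotient.mk (𝔪 ^ k) a) =
          DoubleQuot.quotQuotMk p (𝔪 ^ k) a :=
        DoubleQuot.quotQuotEquivQuotOfLE_symm_mk a hle
      rw [h2]
      exact Submodule.Quotient.restrictScalarsEquiv_symm_mk F I (Ideal.Quotient.mk p a)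
    rw [LinearEquiv.conj_apply]
    simp only [coe_comp, Function.comp_apply, LinearEquiv.coe_coe, hs1]
    rw [Submodule.mapQ_apply]
    have h3 : mulLeft F β (Ideal.Quotient.mk p a) = Ideal.Quotient.mk p (α * a) := by
      rw [mulLeft_apply, hβ, ← map_mul]
    rw [h3]
    have h4 : E (Submodule.Quotient.mk (Ideal.Quotient.mk p (α * a))) =
        Ideal.Quotient.mk (𝔪 ^ k) (α * a) := by
      show e₂.toLinearEquiv (e₁ (Submodule.Quotient.mk (Ideal.Quotient.mk p (α * a)))) =
          Ideal.Quotient.mk (𝔪 ^ k) (α * a)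
      have h5 : e₁ (Submodule.Quotient.mk (Ideal.Quotient.mk p (α * a))) =
          DoubleQuot.quotQuotMk p (𝔪 ^ k) (α * a) :=
        Submodule.Quotient.restrictScalarsEquiv_mk F I (Ideal.Quotient.mk p (α * a))
      rw [h5]
      exact DoubleQuot.quotQuotEquivQuotOfLE_quotQuotMk (α * a) hle
    rw [h4, mulLeft_apply, ← map_mul]
  have hquot : trace F ((A ⧸ p) ⧸ W) (Submodule.mapQ W W (mulLeft F β) hWf) =
      trace F (A ⧸ (𝔪 ^ k : Ideal A)) (mulLeft F (Ideal.Quotient.mk _ α)) := by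
    rw [← hconj, trace_conj']
  -- submodule part
  let eI : (↥W) ≃ₗ[F] (↥I) := (Submodule.restrictScalarsEquiv F (A ⧸ p) (A ⧸ p) I).restrictScalars F
  haveI : FiniteDimensional F (↥I) := Module.Finite.equiv eI
  have torI : Module.IsTorsionBySet A (↥I) (𝔪 : Set A) := by
    intro x c
    obtain ⟨y, hy, hxy⟩ := Ideal.mem_map_iff_of_surjective (Ideal.Quotient.mk p)
      Ideal.Quotient.mk_surjective |>.mp x.2
    apply Subtype.ext
    show (c : A) • (x : A ⧸ p) = 0
    rw [← hxy]
    have hsm : (c : A) • (Ideal.Quotient.mk p y) = Ideal.Quotient.mk p ((c : A) * y) := rfl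
    rw [hsm]
    rw [Ideal.Quotient.eq_zero_iff_mem]
    exact hp ▸ (pow_succ' 𝔪 k) ▸ Ideal.mul_mem_mul c.2 hy
  letI : Module (A ⧸ 𝔪) (↥I) := torI.module
  haveI : IsScalarTower F (A ⧸ 𝔪) (↥I) := torI.isScalarTower
  haveI : FiniteDimensional (A ⧸ 𝔪) (↥I) :=
    Module.Finite.of_restrictScalars_finite F (A ⧸ 𝔪) (↥I)
  have hrestrict : eI.conj ((mulLeft F β).restrict hWf') =
      (LinearMap.lsmul (A ⧸ 𝔪) (↥I) (Ideal.Quotient.mk 𝔪 α)).restrictScalars F := by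
    apply LinearMap.ext; intro x
    apply Subtype.ext
    show ((eI ((mulLeft F β).restrict hWf' (eI.symm x))) : A ⧸ p) =
      ((Ideal.Quotient.mk 𝔪 α • x : ↥I) : A ⧸ p)
    have h6 : (Ideal.Quotient.mk 𝔪 α • x : ↥I) = α • x := torI.mk_smul α x
    rw [h6]
    have h7 : ((eI ((mulLeft F β).restrict hWf' (eI.symm x))) : A ⧸ p) =
        β * ((eI.symm x : ↥W) : A ⧸ p) := rfl
    rw [h7]
    have h8 : ((eI.symm x : ↥W) : A ⧸ p) = (x : A ⧸ p) := rfl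
    rw [h8]
    show β * (x : A ⧸ p) = α • (x : A ⧸ p)
    rw [hβ]
    rw [Algebra.smul_def]
    rfl
  have hsub : trace F (↥W) ((mulLeft F β).restrict hWf') =
      Module.finrank (A ⧸ 𝔪) (↥I) •
        trace F (A ⧸ 𝔪) (mulLeft F (Ideal.Quotient.mk 𝔪 α)) := by
    rw [← trace_conj' ((mulLeft F β).restrict hWf') eI, hrestrict]
    exact trace_lsmul_restrictScalars F (A ⧸ 𝔪) (↥I) (Ideal.Quotient.mk 𝔪 α)
  -- accounting
  refine ⟨m + Module.finrank (A ⧸ 𝔪) (↥I), ?_, ?_⟩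
  · have hd : Module.finrank F (A ⧸ p) =
        Module.finrank F ((A ⧸ p) ⧸ W) + Module.finrank F (↥W) :=
      (Submodule.finrank_quotient_add_finrank W).symm
    have hq : Module.finrank F ((A ⧸ p) ⧸ W) = Module.finrank F (A ⧸ (𝔪 ^ k : Ideal A)) :=
      E.finrank_eq
    have hw : Module.finrank F (↥W) = Module.finrank F (↥I) := eI.finrank_eq
    have hw2 : Module.finrank F (A ⧸ 𝔪) * Module.finrank (A ⧸ 𝔪) (↥I) =
        Module.finrank F (↥I) := Module.finrank_mul_finrank F (A ⧸ 𝔪) (↥I)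
    rw [hd, hq, hw, hm1, ← hw2]
    ring
  · rw [main, hsub, hquot, hm2, add_smul]
    ring

end step

-- base case
lemma base_lemma {F A : Type*} [Field F] [CommRing A] [Algebra F A] [FiniteDimensional F A]
    [IsLocalRing A] (α : A) :
    ∃ m : ℕ,
      Module.finrank F (A ⧸ (IsLocalRing.maximalIdeal A ^ 0 : Ideal A)) =
        m * Module.finrank F (A ⧸ IsLocalRing.maximalIdeal A) ∧
      trace F (A ⧸ (IsLocalRing.maximalIdeal A ^ 0 : Ideal A))
          (mulLeft F (Ideal.Quotient.mk _ α)) =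
        m • trace F (A ⧸ IsLocalRing.maximalIdeal A)
          (mulLeft F (Ideal.Quotient.mk _ α)) := by
  have htop : (IsLocalRing.maximalIdeal A ^ 0 : Ideal A) = ⊤ := by
    rw [pow_zero, Ideal.one_eq_top]
  haveI : Subsingleton (A ⧸ (IsLocalRing.maximalIdeal A ^ 0 : Ideal A)) :=
    Submodule.Quotient.subsingleton_iff.mpr htop
  refine ⟨0, ?_, ?_⟩
  · rw [Module.finrank_zero_of_subsingleton, zero_mul]
  · rw [Subsingleton.elim (mulLeft F (Ideal.Quotient.mk _ α)) 0, map_zero, zero_smul]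


/-- **Local case of the Scheja–Storch trace formula.** Let `A` be a finite-dimensional
commutative local algebra over a field `F` with maximal ideal `𝔪` and residue field
`L = A ⧸ 𝔪`, and suppose `L` is separable over `F`.  Let `lam` be defined by
`dim_F A = lam · [L : F]`.  Then for every `α ∈ A`,
`Tr_A(m_α) = lam · Tr_L(m_ᾱ)`, where `m_α : A → A` is multiplication by `α`, `ᾱ` is the
image of `α` in `L`, `m_ᾱ : L → L` is multiplication by `ᾱ`, and traces are over `F`. -/
theorem scheja_storch_trace_formula_local {F A : Type*} [Field F] [CommRing A]
    [Algebra F A] [FiniteDimensional F A] [IsLocalRing A]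
    [Algebra.IsSeparable F (A ⧸ IsLocalRing.maximalIdeal A)]
    (lam : ℕ)
    (hlam : Module.finrank F A =
      lam * Module.finrank F (A ⧸ IsLocalRing.maximalIdeal A))
    (α : A) :
    LinearMap.trace F A (LinearMap.mulLeft F α) =
      (lam : F) * LinearMap.trace F (A ⧸ IsLocalRing.maximalIdeal A)
        (LinearMap.mulLeft F (Ideal.Quotient.mk (IsLocalRing.maximalIdeal A) α)) := by
  have key : ∀ k : ℕ, ∃ m : ℕ,
      Module.finrank F (A ⧸ (IsLocalRing.maximalIdeal A ^ k : Ideal A)) =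
        m * Module.finrank F (A ⧸ IsLocalRing.maximalIdeal A) ∧
      trace F (A ⧸ (IsLocalRing.maximalIdeal A ^ k : Ideal A))
          (mulLeft F (Ideal.Quotient.mk _ α)) =
        m • trace F (A ⧸ IsLocalRing.maximalIdeal A)
          (mulLeft F (Ideal.Quotient.mk _ α)) := by
    intro k
    induction k with
    | zero => exact base_lemma α
    | succ k ih => exact step_lemma α k ih
  -- nilpotency
  haveI : IsArtinianRing A := isArtinian_of_tower F inferInstance
  obtain ⟨n, hn⟩ : ∃ n, (IsLocalRing.maximalIdeal A ^ n : Ideal A) = ⊥ := by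
    obtain ⟨n, hn⟩ := IsArtinianRing.isNilpotent_jacobson_bot (R := A)
    exact ⟨n, by rw [IsLocalRing.jacobson_eq_maximalIdeal (⊥ : Ideal A) bot_ne_top] at hn; exact hn⟩
  obtain ⟨m, h1, h2⟩ := key n
  -- transfer to A
  let E : (A ⧸ (IsLocalRing.maximalIdeal A ^ n : Ideal A)) ≃ₗ[F] A :=
    (Submodule.quotEquivOfEqBot _ hn).restrictScalars F
  have hconj : E.conj (mulLeft F (Ideal.Quotient.mk (IsLocalRing.maximalIdeal A ^ n) α)) =
      mulLeft F α := by
    apply LinearMap.ext; intro x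
    rw [LinearEquiv.conj_apply]
    simp only [coe_comp, Function.comp_apply, LinearEquiv.coe_coe]
    have hs : E.symm x = Ideal.Quotient.mk _ x := rfl
    rw [hs, mulLeft_apply, mulLeft_apply]
    show E (Ideal.Quotient.mk _ (α * x)) = α * x
    rfl
  have htr : trace F A (mulLeft F α) =
      trace F (A ⧸ (IsLocalRing.maximalIdeal A ^ n : Ideal A))
        (mulLeft F (Ideal.Quotient.mk _ α)) := by
    rw [← hconj, trace_conj']
  -- m = lam
  haveI : FiniteDimensional F (A ⧸ IsLocalRing.maximalIdeal A) :=
    Module.Finite.of_surjective (Ideal.Quotient.mkₐ F _).toLinearMap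
      Ideal.Quotient.mk_surjective
  haveI : (IsLocalRing.maximalIdeal A).IsMaximal := IsLocalRing.maximalIdeal.isMaximal A
  letI : Field (A ⧸ IsLocalRing.maximalIdeal A) :=
    Ideal.Quotient.field (IsLocalRing.maximalIdeal A)
  have hdpos : 0 < Module.finrank F (A ⧸ IsLocalRing.maximalIdeal A) :=
    Module.finrank_pos
  have hfr : Module.finrank F (A ⧸ (IsLocalRing.maximalIdeal A ^ n : Ideal A)) =
      Module.finrank F A := E.finrank_eq
  have hm_lam : m = lam := by
    have := h1
    rw [hfr, hlam] at this
    exact Nat.eq_of_mul_eq_mul_right hdpos this.symm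
  rw [htr, h2, hm_lam, nsmul_eq_mul]
end
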